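/- arXiv:2210.04835 — 3 statements merged into one kernel-verified Lean document; each statement's English description precedes it below -/
import Mathlib

section
/- Let p be a prime, D ≥ 1 a real number, and let φ_{p,D} denote the number of integers 1 ≤ a ≤ 2√p such that gcd(a, p+1) ≤ D. Then φ_{p,D} ≥ 2√p − (2√p/D)·τ(p+1) − τ((p+1)²). -/
open Classical in
theorem count_small_gcd_traces (p : ℕ) (hp : p.Prime) (D : ℝ) (hD : 1 ≤ D) :
    ((((Finset.Icc 1 ⌊2 * Real.sqrt p⌋₊).filter
        (fun a => (Nat.gcd a (p + 1) : ℝ) ≤ D)).card : ℝ) ≥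
      2 * Real.sqrt p - (2 * Real.sqrt p / D) * (p + 1).divisors.card -
        ((p + 1) ^ 2).divisors.card) := by
  have hDpos : (0:ℝ) < D := lt_of_lt_of_le one_pos hD
  have hx : (0:ℝ) ≤ 2 * Real.sqrt p := by positivity
  set x := 2 * Real.sqrt p with hxdef
  set N := ⌊x⌋₊ with hN
  have hNle : (N : ℝ) ≤ x := Nat.floor_le hx
  have hNge : x - 1 ≤ (N : ℝ) := le_of_lt (Nat.sub_one_lt_floor x)
  set P : ℕ → Prop := fun a => (Nat.gcd a (p + 1) : ℝ) ≤ D with hP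
  have hsplit : ((Finset.Icc 1 N).filter P).card
      + ((Finset.Icc 1 N).filter (fun a => ¬ P a)).card = N := by
    rw [Finset.card_filter_add_card_filter_not]
    simp
  -- bad set is covered by multiples of large divisors of p+1
  have hsub : (Finset.Icc 1 N).filter (fun a => ¬ P a) ⊆
      ((p+1).divisors.filter (fun d : ℕ => D < (d:ℝ))).biUnion
        (fun d => (Finset.Icc 1 N).filter (fun a : ℕ => d ∣ a)) := by
    intro a ha
    simp only [Finset.mem_filter, Finset.mem_Icc, hP, not_le] at ha
    obtain ⟨⟨h1, h2⟩, hgt⟩ := ha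
    refine Finset.mem_biUnion.mpr ⟨Nat.gcd a (p+1), ?_, ?_⟩
    · exact Finset.mem_filter.mpr ⟨Nat.mem_divisors.mpr ⟨Nat.gcd_dvd_right _ _, by omega⟩, hgt⟩
    · exact Finset.mem_filter.mpr ⟨Finset.mem_Icc.mpr ⟨h1, h2⟩, Nat.gcd_dvd_left _ _⟩
  have hbad : (((Finset.Icc 1 N).filter (fun a => ¬ P a)).card : ℝ)
      ≤ (x / D) * (p+1).divisors.card := by
    have h1 : ((Finset.Icc 1 N).filter (fun a => ¬ P a)).card
        ≤ ∑ d ∈ (p+1).divisors.filter (fun d : ℕ => D < (d:ℝ)),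
          ((Finset.Icc 1 N).filter (fun a : ℕ => d ∣ a)).card :=
      le_trans (Finset.card_le_card hsub) (Finset.card_biUnion_le)
    have h2 : ∀ d ∈ (p+1).divisors.filter (fun d : ℕ => D < (d:ℝ)),
        (((Finset.Icc 1 N).filter (fun a : ℕ => d ∣ a)).card : ℝ) ≤ x / D := by
      intro d hd
      simp only [Finset.mem_filter] at hd
      have hdD : D < (d:ℝ) := hd.2
      have hcard : ((Finset.Icc 1 N).filter (fun a : ℕ => d ∣ a)).card = N / d := by
        rw [show Finset.Icc 1 N = Finset.Ioc 0 N by rfl]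
        exact Nat.Ioc_filter_dvd_card_eq_div N d
      rw [hcard]
      have hdpos : (0:ℝ) < d := lt_trans hDpos hdD
      calc ((N / d : ℕ) : ℝ) ≤ (N : ℝ) / (d : ℝ) := Nat.cast_div_le
        _ ≤ x / D := by
          apply div_le_div₀ hx hNle hDpos (le_of_lt hdD)
      done
    calc (((Finset.Icc 1 N).filter (fun a => ¬ P a)).card : ℝ)
        ≤ ∑ d ∈ (p+1).divisors.filter (fun d : ℕ => D < (d:ℝ)),
          (((Finset.Icc 1 N).filter (fun a : ℕ => d ∣ a)).card : ℝ) := by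
          exact_mod_cast h1
      _ ≤ ∑ _d ∈ (p+1).divisors.filter (fun d : ℕ => D < (d:ℝ)), (x / D) :=
          Finset.sum_le_sum h2
      _ = ((p+1).divisors.filter (fun d : ℕ => D < (d:ℝ))).card * (x / D) := by
          rw [Finset.sum_const, nsmul_eq_mul]
      _ ≤ (p+1).divisors.card * (x / D) := by
          apply mul_le_mul_of_nonneg_right _ (by positivity)
          exact_mod_cast Finset.card_le_card (Finset.filter_subset _ _)
      _ = (x / D) * (p+1).divisors.card := by ring
  have htau2 : (1:ℝ) ≤ (((p+1)^2).divisors.card : ℝ) := by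
    have : 0 < ((p+1)^2).divisors.card := Finset.card_pos.mpr
      ⟨1, Nat.one_mem_divisors.mpr (by positivity)⟩
    exact_mod_cast this
  have hgood : (((Finset.Icc 1 N).filter P).card : ℝ)
      = (N : ℝ) - (((Finset.Icc 1 N).filter (fun a => ¬ P a)).card : ℝ) := by
    have h : ((((Finset.Icc 1 N).filter P).card : ℝ))
        + (((Finset.Icc 1 N).filter (fun a => ¬ P a)).card : ℝ) = (N : ℝ) := by
      exact_mod_cast hsplit
    linarith
  rw [ge_iff_le]
  rw [hgood]
  have := hNge
  nlinarith [hbad, htau2, hNge]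
end

section
/- For every integer l with p_l > 113 (where p_l is the l-th prime), one has p_l > e·l. -/
theorem nth_prime_gt_e_mul (l : ℕ) (hl : 1 ≤ l)
    (h : 113 < Nat.nth Nat.Prime (l - 1)) :
    (Nat.nth Nat.Prime (l - 1) : ℝ) > Real.exp 1 * l := by
  set p := Nat.nth Nat.Prime (l - 1) with hpdef
  have hp : p.Prime := Nat.prime_nth_prime _
  have hcount : Nat.count Nat.Prime p = l - 1 :=
    Nat.count_nth_of_infinite Nat.infinite_setOf_prime _
  have hp127 : 127 ≤ p := by
    by_contra hc
    push_neg at hc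
    interval_cases p <;> norm_num at hp
  have he : Real.exp 1 < 2.7182818286 := Real.exp_one_lt_d9
  rcases le_or_gt l 39 with hl39 | hl40
  · have hlr : (l : ℝ) ≤ 39 := by exact_mod_cast hl39
    have hpr : (127 : ℝ) ≤ p := by exact_mod_cast hp127
    nlinarith [Real.exp_pos 1]
  · -- large case: use the sieve bound with a = 30, k = 31
    have hb := Nat.primeCounting'_add_le (a := 30) (k := 31) (by norm_num) (by norm_num)
      (p - 31)
    rw [show 31 + (p - 31) = p by omega] at hb
    have hpi : Nat.primeCounting' p = l - 1 := hcount
    have hpi31 : Nat.primeCounting' 31 = 10 := by decide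
    have ht : Nat.totient 30 = 8 := by decide
    rw [hpi, hpi31, ht] at hb
    -- hb : l - 1 ≤ 10 + 8 * ((p - 31) / 30 + 1)
    have hd : 30 * ((p - 31) / 30) ≤ p - 31 := Nat.mul_div_le _ _
    have hkey : 30 * l ≤ 8 * p + 322 := by omega
    have hkeyr : (30 : ℝ) * l ≤ 8 * p + 322 := by exact_mod_cast hkey
    have hlr : (40 : ℝ) ≤ l := by exact_mod_cast hl40
    nlinarith [Real.exp_pos 1]
end

section
/- For every integer n ≥ 2, Euler's totient function satisfies φ(n) > n/(4·log n). -/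
open Finset

lemma key_prod_bound (S : Finset ℕ) (h2 : ∀ p ∈ S, 2 ≤ p) :
    ∏ p ∈ S, p ≤ (S.card + 1) * ∏ p ∈ S, (p - 1) := by
  induction S using Finset.strongInduction with
  | _ S ih =>
    rcases S.eq_empty_or_nonempty with rfl | hS
    · simp
    · set q := S.max' hS with hq
      have hqS : q ∈ S := S.max'_mem hS
      have hsub : S ⊆ Finset.Icc 2 q := fun x hx =>
        Finset.mem_Icc.2 ⟨h2 x hx, S.le_max' x hx⟩
      have hcard : S.card ≤ q - 1 := by
        calc S.card ≤ (Finset.Icc 2 q).card := Finset.card_le_card hsub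
        _ = q - 1 := by rw [Nat.card_Icc]; omega
      have hq2 : 2 ≤ q := h2 q hqS
      set S' := S.erase q with hS'
      have hss : S' ⊂ S := Finset.erase_ssubset hqS
      have ihS' := ih S' hss (fun p hp => h2 p (Finset.mem_of_mem_erase hp))
      have hcard' : S'.card = S.card - 1 := Finset.card_erase_of_mem hqS
      have hcardpos : 1 ≤ S.card := Finset.card_pos.2 hS
      have hprod : ∏ p ∈ S, p = q * ∏ p ∈ S', p := (Finset.mul_prod_erase S _ hqS).symm
      have hprod1 : ∏ p ∈ S, (p - 1) = (q - 1) * ∏ p ∈ S', (p - 1) :=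
        (Finset.mul_prod_erase S (fun p => p - 1) hqS).symm
      rw [hprod, hprod1]
      calc q * ∏ p ∈ S', p ≤ q * ((S'.card + 1) * ∏ p ∈ S', (p - 1)) :=
            Nat.mul_le_mul_left _ ihS'
        _ = q * (S'.card + 1) * ∏ p ∈ S', (p - 1) := by ring
        _ ≤ (S.card + 1) * (q - 1) * ∏ p ∈ S', (p - 1) := by
            apply Nat.mul_le_mul_right
            have hc : S'.card + 1 = S.card := by omega
            rw [hc]
            have he : q - 1 + 1 = q := by omega
            nlinarith [hcard, he]
        _ = (S.card + 1) * ((q - 1) * ∏ p ∈ S', (p - 1)) := by ring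

theorem totient_lower_bound (n : ℕ) (hn : 2 ≤ n) :
    (Nat.totient n : ℝ) > (n : ℝ) / (4 * Real.log n) := by
  have hn0 : 0 < n := by omega
  set k := n.primeFactors.card with hk
  have hmul := Nat.totient_mul_prod_primeFactors n
  have hprodpos : 0 < ∏ p ∈ n.primeFactors, (p - 1) :=
    Finset.prod_pos fun p hp => by
      have := (Nat.prime_of_mem_primeFactors hp).two_le; omega
  have hkey := key_prod_bound n.primeFactors
    (fun p hp => (Nat.prime_of_mem_primeFactors hp).two_le)
  have hnle : n ≤ n.totient * (k + 1) := by
    have h1 : n * ∏ p ∈ n.primeFactors, (p - 1) ≤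
        n.totient * (k + 1) * ∏ p ∈ n.primeFactors, (p - 1) := by
      calc n * ∏ p ∈ n.primeFactors, (p - 1)
          = n.totient * ∏ p ∈ n.primeFactors, p := hmul.symm
        _ ≤ n.totient * ((k + 1) * ∏ p ∈ n.primeFactors, (p - 1)) :=
            Nat.mul_le_mul_left _ hkey
        _ = n.totient * (k + 1) * ∏ p ∈ n.primeFactors, (p - 1) := by ring
    exact Nat.le_of_mul_le_mul_right h1 hprodpos
  have h2k : 2 ^ k ≤ n := by
    calc 2 ^ k ≤ ∏ p ∈ n.primeFactors, p :=
          Finset.pow_card_le_prod _ _ _ (fun p hp => (Nat.prime_of_mem_primeFactors hp).two_le)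
      _ ≤ n := Nat.le_of_dvd hn0 (Nat.prod_primeFactors_dvd n)
  have hlog2 : Real.log 2 ≤ Real.log n :=
    Real.log_le_log (by norm_num) (by exact_mod_cast hn)
  have hklog : (k : ℝ) * Real.log 2 ≤ Real.log n := by
    have h := Real.log_le_log (by positivity)
      (show (2 : ℝ) ^ k ≤ (n : ℝ) by exact_mod_cast h2k)
    rwa [Real.log_pow] at h
  have hl2 : (0.6931471803 : ℝ) < Real.log 2 := Real.log_two_gt_d9
  have hlogn : 4 * Real.log n > (k : ℝ) + 1 := by nlinarith
  have hφpos : (0 : ℝ) < n.totient := by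
    exact_mod_cast Nat.totient_pos.mpr hn0
  rw [gt_iff_lt, div_lt_iff₀ (by nlinarith)]
  have hle : (n : ℝ) ≤ n.totient * ((k : ℝ) + 1) := by exact_mod_cast hnle
  nlinarith
end
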